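/- arXiv:2105.05568 — 5 statements merged into one kernel-verified Lean document; each statement's English description precedes it below -/
import Mathlib

section
/- For the compact group SU(2) with spherical polynomial φ_{m,l}(g) = C(m,k) ⟨g(e₁^k e₂^{m-k}), e₁^k e₂^{m-k}⟩ where l = m - 2k and C(m,k) is the binomial coefficient, the following recurrence holds: ⟨g e₂, e₁⟩ (E⁺ φ_{m,l})(g) = (1/4) · ((m+l)(m-l+2)/(m+1)) · (φ_{m+1,l-1}(g) − φ_{m-1,l-1}(g)), where E⁺ acts by right differentiation on functions on SL(2,ℂ). -/
/- SL(2,ℂ) acts on the m-th symmetric power Sᵐ(ℂ²).  In the orthogonal monomial basis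
`e₁^j ⊙ e₂^{m-j}` (with the inner product induced from ℂ², normalized so that
`binom(m,k)‖e₁^k ⊙ e₂^{m-k}‖² = 1`), the spherical matrix coefficient
`φ_{m,l}(g) = binom(m,k)·⟨g(e₁^k ⊙ e₂^{m-k}), e₁^k ⊙ e₂^{m-k}⟩`, with `l = m − 2k`,
equals the coefficient of `e₁^k ⊙ e₂^{m-k}` in `(g e₁)^{⊙k} ⊙ (g e₂)^{⊙(m-k)}`,
which is the explicit polynomial in the entries of `g` below. -/
noncomputable def phi (m k : ℕ) (g : Matrix (Fin 2) (Fin 2) ℂ) : ℂ :=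
  ∑ i ∈ Finset.range (k + 1),
    (Nat.choose k i : ℂ) * (Nat.choose (m - k) (k - i) : ℂ) *
      g 0 0 ^ i * g 1 0 ^ (k - i) * g 0 1 ^ (k - i) * g 1 1 ^ ((m - k) - (k - i))

/-- Right differentiation by `E⁺ = E₁₂` of a function on SL(2,ℂ):
`(E⁺ f)(g) = d/ds f(g·exp(sE⁺))|₀`, where `exp(sE⁺) = 1 + sE⁺`. -/
noncomputable def rightDerivEplus (f : Matrix (Fin 2) (Fin 2) ℂ → ℂ)
    (g : Matrix (Fin 2) (Fin 2) ℂ) : ℂ :=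
  deriv (fun s : ℂ => f (g * (1 + s • (!![0, 1; 0, 0] : Matrix (Fin 2) (Fin 2) ℂ)))) 0

/-! Write `g = !![a, b; c, d]` and `n = m - k`. Then
`φ_{m,l}(g) = ∑ⱼ C(k,j) C(n,j) a^{k-j} (bc)^j d^{n-j}`, and right translation by
`exp(sE⁺) = 1 + sE⁺` is `(b, d) ↦ (b + sa, d + sc)`, i.e. `E⁺ = a ∂_b + c ∂_d`.
Both `b · E⁺φ_{m,l}` and `n · (φ_{m+1,l-1} - (ad - bc) φ_{m-1,l-1})` are multiples, by `k + 1`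
and by `m + 1`, of the single polynomial `∑ⱼ C(k,j) C(n,j+1) a^{k-j} (bc)^{j+1} d^{n-j-1}`:
once `φ_{m-1,l-1}` is multiplied by `ad - bc`, every term is a combination of the monomials
`a^{k+1-j} (bc)^j d^{n-j}`, and comparing coefficients only needs Pascal's rule and the
absorption identities for binomials. Since `ad - bc = 1`, the recurrence follows. -/

open Finset

theorem Nat.choose_succ_mul_choose_succ_mul_add (k n j : ℕ) (hj : j ≤ k) :
    k.choose (j + 1) * n.choose (j + 1) * (j + 1) + k.choose j * n.choose j * (n - j) =
      (k + 1) * (k.choose j * n.choose (j + 1)) := by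
  have hk := Nat.choose_succ_right_eq k j
  have hn := Nat.choose_succ_right_eq n j
  have hkj : k - j + (j + 1) = k + 1 := by omega
  calc _ = k.choose j * n.choose (j + 1) * (k - j + (j + 1)) := by
          linear_combination n.choose (j + 1) * hk - k.choose j * hn
    _ = _ := by rw [hkj, mul_comm]

theorem Nat.add_one_mul_choose_succ_mul_choose_succ_add (k n j : ℕ) :
    (n + 1) * (k + 1).choose (j + 1) * (n + 1).choose (j + 1) + (n + 1) * k.choose j * n.choose j =
      (n + 1) * k.choose (j + 1) * n.choose (j + 1) +
        (n + k + 2) * k.choose j * (n + 1).choose (j + 1) := by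
  have hk := Nat.add_one_mul_choose_eq k j
  have hn := Nat.add_one_mul_choose_eq n j
  rw [Nat.choose_succ_succ' k, Nat.choose_succ_succ' n] at *
  linear_combination (k.choose j + k.choose (j + 1)) * hn - (n.choose j + n.choose (j + 1)) * hk

theorem Finset.sum_range_succ_eq_add_sum_shift_of_eq_zero {M : Type*} [AddCommMonoid M]
    (h : ℕ → M) (k : ℕ) (hk : h (k + 1) = 0) :
    ∑ j ∈ range (k + 1), h j = h 0 + ∑ j ∈ range (k + 1), h (j + 1) := by
  rw [sum_range_succ', sum_range_succ (fun j => h (j + 1)), hk, add_zero, add_comm]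

section SphericalPolynomial

variable {R : Type*} [CommRing R]

/-- `phi (k + n) k` in the entries `!![a, b; c, d]`, indexed by the power `j` of `bc`;
parametrising by `n = m - k` rather than `m` keeps truncated subtraction out of the algebra. -/
def sphPoly (k n : ℕ) (a b c d : R) : R :=
  ∑ j ∈ range (k + 1), (k.choose j * n.choose j : R) * a ^ (k - j) * (b * c) ^ j * d ^ (n - j)

def sphPolyShift (k n : ℕ) (a b c d : R) : R :=
  ∑ j ∈ range (k + 1),
    (k.choose j * n.choose (j + 1) : R) * a ^ (k - j) * (b * c) ^ (j + 1) * d ^ (n - (j + 1))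

def sphPolyDeriv (k n : ℕ) (a b c d : R) : R :=
  ∑ j ∈ range (k + 1), (k.choose j * n.choose j : R) * a ^ (k - j) *
    (j * (b * c) ^ (j - 1) * (a * c) * d ^ (n - j) +
      (b * c) ^ j * ((n - j : ℕ) * d ^ (n - j - 1) * c))

theorem sphPolyShift_zero (k : ℕ) (a b c d : R) : sphPolyShift k 0 a b c d = 0 := by
  simp [sphPolyShift]

theorem mul_sphPolyDeriv (k n : ℕ) (a b c d : R) :
    b * sphPolyDeriv k n a b c d = (k + 1) * sphPolyShift k n a b c d := by
  set T : ℕ → R := fun j => a ^ (k + 1 - j) * (b * c) ^ j * d ^ (n - j) with hT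
  set f : ℕ → R := fun j => (k.choose j * n.choose j * j : ℕ) * T j with hf
  have hexpand : b * sphPolyDeriv k n a b c d = ∑ j ∈ range (k + 1),
      (f j + (k.choose j * n.choose j * (n - j) : ℕ) * T (j + 1)) := by
    rw [sphPolyDeriv, mul_sum]
    refine sum_congr rfl fun j hj => ?_
    have hjk : j ≤ k := Nat.lt_succ_iff.mp (mem_range.mp hj)
    have hpow : (j : R) * (b * c) ^ (j - 1) * (b * c) = j * (b * c) ^ j := by
      rcases j with _ | j <;> simp [pow_succ, mul_assoc]
    simp only [hf, hT]
    rw [Nat.sub_add_comm hjk, Nat.add_sub_add_right, Nat.sub_sub, pow_succ a]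
    push_cast
    linear_combination (k.choose j * n.choose j : R) * a ^ (k - j) * a * d ^ (n - j) * hpow
  have hshift : ∑ j ∈ range (k + 1), f j = ∑ j ∈ range (k + 1), f (j + 1) := by
    rw [sum_range_succ_eq_add_sum_shift_of_eq_zero f k (by simp [hf])]
    simp [hf]
  rw [hexpand, sum_add_distrib, hshift, ← sum_add_distrib, sphPolyShift, mul_sum]
  refine sum_congr rfl fun j hj => ?_
  have hcoef := Nat.choose_succ_mul_choose_succ_mul_add k n j
    (Nat.lt_succ_iff.mp (mem_range.mp hj))
  simp only [hf, hT, Nat.add_sub_add_right]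
  rw [← add_mul, ← Nat.cast_add, hcoef]
  push_cast
  ring

theorem add_one_mul_sphPoly_succ (k n : ℕ) (a b c d : R) :
    (n + 1) * sphPoly (k + 1) (n + 1) a b c d =
      (n + 1) * ((a * d - b * c) * sphPoly k n a b c d) +
        (n + k + 2) * sphPolyShift k (n + 1) a b c d := by
  set T : ℕ → R := fun j => a ^ (k + 1 - j) * (b * c) ^ j * d ^ (n + 1 - j) with hT
  have hdet : (a * d - b * c) * sphPoly k n a b c d =
      ∑ j ∈ range (k + 1), (k.choose j * n.choose j : R) * (T j - T (j + 1)) := by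
    rw [sphPoly, mul_sum]
    refine sum_congr rfl fun j hj => ?_
    have hjk : j ≤ k := Nat.lt_succ_iff.mp (mem_range.mp hj)
    rcases le_or_gt j n with hjn | hjn
    · simp only [hT, Nat.sub_add_comm hjk, Nat.sub_add_comm hjn, Nat.add_sub_add_right]
      ring
    · simp [Nat.choose_eq_zero_of_lt hjn]
  have hsplit : ∑ j ∈ range (k + 1), (k.choose j * n.choose j : R) * (T j - T (j + 1)) =
      T 0 + ∑ j ∈ range (k + 1), (k.choose (j + 1) * n.choose (j + 1) : R) * T (j + 1) -
        ∑ j ∈ range (k + 1), (k.choose j * n.choose j : R) * T (j + 1) := by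
    simp only [mul_sub, sum_sub_distrib]
    rw [sum_range_succ_eq_add_sum_shift_of_eq_zero _ k (by simp)]
    simp
  have hlead : sphPoly (k + 1) (n + 1) a b c d = T 0 + ∑ j ∈ range (k + 1),
      ((k + 1).choose (j + 1) * (n + 1).choose (j + 1) : R) * T (j + 1) := by
    rw [sphPoly, sum_range_succ', add_comm]
    simp [hT, mul_assoc]
  have hshift : sphPolyShift k (n + 1) a b c d =
      ∑ j ∈ range (k + 1), (k.choose j * (n + 1).choose (j + 1) : R) * T (j + 1) := by
    simp only [sphPolyShift, hT, Nat.add_sub_add_right, mul_assoc]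
  have hcoef : ∑ j ∈ range (k + 1),
      ((n + 1) * (((k + 1).choose (j + 1) * (n + 1).choose (j + 1) : R) * T (j + 1)) +
        (n + 1) * ((k.choose j * n.choose j : R) * T (j + 1))) = ∑ j ∈ range (k + 1),
      ((n + 1) * ((k.choose (j + 1) * n.choose (j + 1) : R) * T (j + 1)) +
        (n + k + 2) * ((k.choose j * (n + 1).choose (j + 1) : R) * T (j + 1))) := by
    refine sum_congr rfl fun j _ => ?_
    have h := Nat.add_one_mul_choose_succ_mul_choose_succ_add k n j
    apply_fun (Nat.cast : ℕ → R) at h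
    push_cast at h
    linear_combination T (j + 1) * h
  rw [hlead, hdet, hsplit, hshift]
  simp only [sum_add_distrib] at hcoef
  simp only [mul_add, mul_sub, mul_sum]
  linear_combination hcoef

end SphericalPolynomial

theorem hasDerivAt_sphPoly {𝕜 : Type*} [NontriviallyNormedField 𝕜] (k n : ℕ) (a b c d : 𝕜) :
    HasDerivAt (fun s => sphPoly k n a (b + s * a) c (d + s * c))
      (sphPolyDeriv k n a b c d) 0 := by
  refine HasDerivAt.fun_sum fun j _ => ?_
  have hb : HasDerivAt (fun s : 𝕜 => (b + s * a) * c) (a * c) 0 := by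
    simpa using (((hasDerivAt_id (0 : 𝕜)).mul_const a).const_add b).mul_const c
  have hd : HasDerivAt (fun s : 𝕜 => d + s * c) c 0 := by
    simpa using ((hasDerivAt_id (0 : 𝕜)).mul_const c).const_add d
  simpa only [mul_assoc, zero_mul, add_zero] using
    ((hb.fun_pow j).fun_mul (hd.fun_pow (n - j))).const_mul
      ((k.choose j * n.choose j : 𝕜) * a ^ (k - j))

theorem mul_one_add_smul_eplus (g : Matrix (Fin 2) (Fin 2) ℂ) (s : ℂ) :
    g * (1 + s • !![0, 1; 0, 0]) = !![g 0 0, g 0 1 + s * g 0 0; g 1 0, g 1 1 + s * g 1 0] := by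
  ext i j
  fin_cases i <;> fin_cases j <;>
    simp [Matrix.mul_apply, Fin.sum_univ_two, Matrix.one_apply] <;> ring

theorem phi_eq_sphPoly (m k : ℕ) (g : Matrix (Fin 2) (Fin 2) ℂ) :
    phi m k g = sphPoly k (m - k) (g 0 0) (g 0 1) (g 1 0) (g 1 1) := by
  rw [phi, sphPoly, ← sum_range_reflect]
  refine sum_congr rfl fun j hj => ?_
  have hjk : j ≤ k := Nat.lt_succ_iff.mp (mem_range.mp hj)
  rw [Nat.add_sub_cancel, Nat.sub_sub_self hjk, Nat.choose_symm hjk]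
  ring

theorem rightDerivEplus_phi (m k : ℕ) (g : Matrix (Fin 2) (Fin 2) ℂ) :
    rightDerivEplus (phi m k) g = sphPolyDeriv k (m - k) (g 0 0) (g 0 1) (g 1 0) (g 1 1) := by
  have hcurve : (fun s : ℂ => phi m k (g * (1 + s • !![0, 1; 0, 0]))) =
      fun s => sphPoly k (m - k) (g 0 0) (g 0 1 + s * g 0 0) (g 1 0) (g 1 1 + s * g 1 0) := by
    funext s
    rw [mul_one_add_smul_eplus, phi_eq_sphPoly]
    simp
  rw [rightDerivEplus, hcurve, (hasDerivAt_sphPoly _ _ _ _ _ _).deriv]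

/-- Recurrence formula: `⟨g e₂, e₁⟩ (E⁺ φ_{m,l})(g)
  = (1/4)·((m+l)(m−l+2)/(m+1))·(φ_{m+1,l−1}(g) − φ_{m−1,l−1}(g))`.
Here `⟨g e₂, e₁⟩ = g₀₁`, `l = m − 2k`, and `φ_{m+1,l−1}`, `φ_{m−1,l−1}` correspond to
the parameters `(m+1, k+1)` and `(m−1, k)` respectively. -/
theorem spherical_recurrence_Eplus (m k : ℕ) (hk : k ≤ m) (l : ℤ)
    (hl : l = (m : ℤ) - 2 * k)
    (g : Matrix (Fin 2) (Fin 2) ℂ) (hg : g.det = 1) :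
    g 0 1 * rightDerivEplus (phi m k) g =
      (1 / 4) * ((((m : ℂ) + (l : ℂ)) * ((m : ℂ) - (l : ℂ) + 2)) / ((m : ℂ) + 1)) *
        (phi (m + 1) (k + 1) g - phi (m - 1) k g) := by
  obtain ⟨n, rfl⟩ : ∃ n, m = k + n := ⟨m - k, by omega⟩
  have hdet : g 0 0 * g 1 1 - g 0 1 * g 1 0 = 1 := by rw [← Matrix.det_fin_two, hg]
  have hcoef : (1 / 4 : ℂ) *
      ((((k + n : ℕ) : ℂ) + l) * ((k + n : ℕ) - l + 2) / ((k + n : ℕ) + 1)) =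
        n * (k + 1) / (k + n + 1) := by
    subst hl; push_cast; ring
  rw [rightDerivEplus_phi, phi_eq_sphPoly, phi_eq_sphPoly, mul_sphPolyDeriv, hcoef,
    Nat.add_sub_cancel_left, show k + n + 1 - (k + 1) = n by omega,
    show k + n - 1 - k = n - 1 by omega]
  rcases n with _ | n
  · simp [sphPolyShift_zero]
  · have h := add_one_mul_sphPoly_succ k n (g 0 0) (g 0 1) (g 1 0) (g 1 1)
    rw [hdet, one_mul] at h
    rw [div_mul_eq_mul_div, eq_div_iff (by exact_mod_cast Nat.succ_ne_zero (k + (n + 1)))]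
    push_cast
    linear_combination -(k + 1 : ℂ) * h
end

section
/- For SU(2), with φ_{m,l} the (l)-spherical matrix coefficient polynomial, the recurrence ⟨g e₁, e₂⟩ (E⁻ φ_{m,l})(g) = (1/4) · ((m−l)(m+l+2)/(m+1)) · (φ_{m+1,l+1}(g) − φ_{m-1,l+1}(g)) holds for all g ∈ SL(2,ℂ). -/
/-- Right differentiation by `E⁻ = E₂₁` of a function on SL(2,ℂ):
`(E⁻ f)(g) = d/ds f(g·exp(sE⁻))|₀`, where `exp(sE⁻) = 1 + sE⁻`. -/
noncomputable def rightDerivEminus (f : Matrix (Fin 2) (Fin 2) ℂ → ℂ)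
    (g : Matrix (Fin 2) (Fin 2) ℂ) : ℂ :=
  deriv (fun s : ℂ => f (g * (1 + s • (!![0, 0; 1, 0] : Matrix (Fin 2) (Fin 2) ℂ)))) 0


/-! Read the columns of `g` as the linear polynomials `P = g₀₀ X + g₁₀` and `Q = g₀₁ X + g₁₁`;
then `φ_{m,k}(g)` is the `X^k`-coefficient of `P^k Q^(m-k)`. Right translation by
`exp(sE⁻) = 1 + sE⁻` replaces `P` by `P + sQ`, so `E⁻φ_{m,k}(g) = k·[X^k] P^(k-1) Q^(m-k+1)`.
With `H = P^k Q^(m-k+1)` and `det g = 1` entering only as `X = g₁₁ P - g₁₀ Q`, one has the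
polynomial identity `(m+1) g₁₀ P^(k-1) Q^(m-k+1) = (m-k+1)(H - X P^(k-1) Q^(m-k)) - (X H' - k H)`,
and the Euler operator `X·d/dX` acts on `X^k` by `k`, so the last bracket has no `X^k` term. -/

open Polynomial

namespace Polynomial

theorem coeff_C_mul_X_add_C_pow {R : Type*} [CommSemiring R] (x y : R) (n k : ℕ) :
    ((C x * X + C y) ^ n).coeff k = n.choose k * x ^ k * y ^ (n - k) := by
  have hterm (j : ℕ) : ((C x * X) ^ j * C y ^ (n - j) * (n.choose j : R[X])).coeff k =
      if k = j then n.choose j * x ^ j * y ^ (n - j) else 0 := by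
    rw [mul_pow, ← C_pow, ← C_pow, ← C_eq_natCast, mul_comm (C _), mul_assoc, mul_assoc,
      ← C_mul, ← C_mul, coeff_X_pow_mul', coeff_C]
    split_ifs <;> first | omega | ring
  rw [add_pow, finsetSum_coeff, Finset.sum_congr rfl (fun j _ => hterm j), Finset.sum_ite_eq]
  split_ifs with hk
  · rfl
  · rw [Finset.mem_range, not_lt] at hk
    simp [Nat.choose_eq_zero_of_lt (Nat.lt_of_succ_le hk)]

theorem hasDerivAt_coeff_add_C_mul_pow_mul {𝕜 : Type*} [NontriviallyNormedField 𝕜]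
    (P Q : 𝕜[X]) (k N : ℕ) (F : 𝕜[X]) :
    HasDerivAt (fun s : 𝕜 => ((P + C s * Q) ^ k * F).coeff N)
      (k * (P ^ (k - 1) * Q * F).coeff N) 0 := by
  induction k generalizing F with
  | zero => simpa using hasDerivAt_const (0 : 𝕜) (F.coeff N)
  | succ k ih =>
    have hsplit (s : 𝕜) : ((P + C s * Q) ^ (k + 1) * F).coeff N =
        ((P + C s * Q) ^ k * (P * F)).coeff N + s * ((P + C s * Q) ^ k * (Q * F)).coeff N := by
      rw [← coeff_C_mul, ← coeff_add]
      ring_nf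
    have hpow : (k : 𝕜) * (P ^ (k - 1) * Q * (P * F)).coeff N = k * (P ^ k * Q * F).coeff N := by
      rcases k with _ | k
      · simp
      · rw [Nat.add_sub_cancel, pow_succ]
        ring_nf
    simp_rw [hsplit]
    refine ((ih (P * F)).add ((hasDerivAt_id' (0 : 𝕜)).fun_mul (ih (Q * F)))).congr_deriv ?_
    rw [hpow, C_0, zero_mul, add_zero, Nat.add_sub_cancel, Nat.cast_succ, ← mul_assoc (P ^ k)]
    ring

end Polynomial

section ColumnPoly

variable {R : Type*}

noncomputable def columnPoly [Semiring R] (g : Matrix (Fin 2) (Fin 2) R) (j : Fin 2) : R[X] :=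
  C (g 0 j) * X + C (g 1 j)

theorem derivative_columnPoly [Semiring R] (g : Matrix (Fin 2) (Fin 2) R) (j : Fin 2) :
    derivative (columnPoly g j) = C (g 0 j) := by
  simp [columnPoly]

theorem columnPoly_mul_one_add_smul_zero [CommSemiring R] (g : Matrix (Fin 2) (Fin 2) R) (s : R) :
    columnPoly (g * (1 + s • !![0, 0; 1, 0])) 0 = columnPoly g 0 + C s * columnPoly g 1 := by
  simp [columnPoly, Matrix.mul_apply, Fin.sum_univ_two]
  ring

theorem columnPoly_mul_one_add_smul_one [CommSemiring R] (g : Matrix (Fin 2) (Fin 2) R) (s : R) :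
    columnPoly (g * (1 + s • !![0, 0; 1, 0])) 1 = columnPoly g 1 := by
  simp [columnPoly, Matrix.mul_apply, Fin.sum_univ_two]

theorem C_mul_columnPoly_sub_C_mul_columnPoly [CommRing R] (g : Matrix (Fin 2) (Fin 2) R) :
    C (g 1 1) * columnPoly g 0 - C (g 1 0) * columnPoly g 1 = C g.det * X := by
  rw [columnPoly, columnPoly, Matrix.det_fin_two, C_sub, C_mul, C_mul]
  ring

theorem coeff_columnPoly_recurrence [CommRing R] (g : Matrix (Fin 2) (Fin 2) R)
    (hg : g.det = 1) (K n : ℕ) :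
    ((K : R) + n + 2) * g 1 0 * (columnPoly g 0 ^ K * columnPoly g 1 ^ (n + 1)).coeff (K + 1) =
      ((n : R) + 1) * ((columnPoly g 0 ^ (K + 1) * columnPoly g 1 ^ (n + 1)).coeff (K + 1) -
        (columnPoly g 0 ^ K * columnPoly g 1 ^ n).coeff K) := by
  set P := columnPoly g 0
  set Q := columnPoly g 1
  set H := P ^ (K + 1) * Q ^ (n + 1)
  have hX : X = C (g 1 1) * P - C (g 1 0) * Q := by
    rw [C_mul_columnPoly_sub_C_mul_columnPoly, hg, C_1, one_mul]
  have hH : derivative H = C ((K : R) + 1) * C (g 0 0) * P ^ K * Q ^ (n + 1) +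
      C ((n : R) + 1) * C (g 0 1) * P ^ (K + 1) * Q ^ n := by
    simp only [H, derivative_mul, derivative_pow, derivative_columnPoly, P, Q, Nat.add_sub_cancel,
      Nat.cast_succ]
    ring
  have hpoly : C (((K : R) + n + 2) * g 1 0) * (P ^ K * Q ^ (n + 1)) =
      C ((n : R) + 1) * (H - X * (P ^ K * Q ^ n)) - (X * derivative H - C ((K : R) + 1) * H) := by
    rw [hH]
    linear_combination (norm := skip) (C ((n : R) + 1) * P ^ K * Q ^ n) * hX
    simp only [H, P, Q, columnPoly, C_mul, C_add, C_1, C_ofNat, map_natCast]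
    ring
  have heuler : (X * derivative H).coeff (K + 1) = ((K : R) + 1) * H.coeff (K + 1) := by
    rw [coeff_X_mul, coeff_derivative, mul_comm]
  have hcoeff := congrArg (coeff · (K + 1)) hpoly
  simp only [coeff_C_mul, coeff_sub, coeff_X_mul, heuler] at hcoeff
  linear_combination hcoeff

end ColumnPoly

theorem phi_eq_coeff (m k : ℕ) (g : Matrix (Fin 2) (Fin 2) ℂ) :
    phi m k g = (columnPoly g 0 ^ k * columnPoly g 1 ^ (m - k)).coeff k := by
  rw [coeff_mul, Finset.Nat.sum_antidiagonal_eq_sum_range_succ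
    (fun i j => (columnPoly g 0 ^ k).coeff i * (columnPoly g 1 ^ (m - k)).coeff j)]
  refine Finset.sum_congr rfl fun i _ => ?_
  rw [columnPoly, columnPoly, coeff_C_mul_X_add_C_pow, coeff_C_mul_X_add_C_pow]
  ring

theorem rightDerivEminus_phi (m k : ℕ) (g : Matrix (Fin 2) (Fin 2) ℂ) :
    rightDerivEminus (phi m k) g =
      k * (columnPoly g 0 ^ (k - 1) * columnPoly g 1 ^ (m - k + 1)).coeff k := by
  have hcurve : (fun s : ℂ => phi m k (g * (1 + s • !![0, 0; 1, 0]))) = fun s =>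
      ((columnPoly g 0 + C s * columnPoly g 1) ^ k * columnPoly g 1 ^ (m - k)).coeff k := by
    funext s
    rw [phi_eq_coeff, columnPoly_mul_one_add_smul_zero, columnPoly_mul_one_add_smul_one]
  rw [rightDerivEminus, hcurve,
    (hasDerivAt_coeff_add_C_mul_pow_mul _ _ k k (columnPoly g 1 ^ (m - k))).deriv,
    mul_assoc, ← pow_succ']

/-- Recurrence formula: `⟨g e₁, e₂⟩ (E⁻ φ_{m,l})(g)
  = (1/4)·((m−l)(m+l+2)/(m+1))·(φ_{m+1,l+1}(g) − φ_{m−1,l+1}(g))` for all g ∈ SL(2,ℂ).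
Here `⟨g e₁, e₂⟩ = g₁₀`, `l = m − 2k`, and `φ_{m+1,l+1}`, `φ_{m−1,l+1}` correspond to
the parameters `(m+1, k)` and `(m−1, k−1)` respectively. -/
theorem spherical_recurrence_Eminus (m k : ℕ) (hk : k ≤ m) (l : ℤ)
    (hl : l = (m : ℤ) - 2 * k)
    (g : Matrix (Fin 2) (Fin 2) ℂ) (hg : g.det = 1) :
    g 1 0 * rightDerivEminus (phi m k) g =
      (1 / 4) * ((((m : ℂ) - (l : ℂ)) * ((m : ℂ) + (l : ℂ) + 2)) / ((m : ℂ) + 1)) *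
        (phi (m + 1) k g - phi (m - 1) (k - 1) g) := by
  obtain ⟨n, rfl⟩ := Nat.exists_eq_add_of_le hk
  have hl' : (l : ℂ) = n - k := by rw [hl]; push_cast; ring
  rcases k with _ | K
  · simp [rightDerivEminus_phi, hl']
  have hcoef : (1 / 4 : ℂ) * ((((K + 1 + n : ℕ) : ℂ) - (n - (K + 1 : ℕ))) *
      ((K + 1 + n : ℕ) + (n - (K + 1 : ℕ)) + 2) / ((K + 1 + n : ℕ) + 1)) =
      (K + 1) * (n + 1) / ((K + 1 + n : ℕ) + 1) := by
    rw [mul_div_assoc']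
    congr 1
    push_cast
    ring
  rw [rightDerivEminus_phi, phi_eq_coeff, phi_eq_coeff, hl', hcoef, div_mul_eq_mul_div,
    eq_div_iff (Nat.cast_add_one_ne_zero _)]
  simp only [show K + 1 + n + 1 - (K + 1) = n + 1 by omega, show K + 1 + n - (K + 1) = n by omega,
    show K + 1 + n - 1 - K = n by omega, Nat.add_sub_cancel]
  push_cast
  linear_combination ((K : ℂ) + 1) * coeff_columnPoly_recurrence g hg K n
end

section
/- For g = exp(tE) with E = E⁺ + E⁻ = [[0,1],[1,0]], the normalized spherical polynomial ψ_{m,l}(g) = (2^m / binom(m,k)) φ_{m,l}(g), l = m−2k, is a trigonometric polynomial in t whose leading term is e^{imt}; that is, ψ_{m,l}(exp(tE)) − e^{imt} is a linear combination of e^{ijt} with |j| < m. -/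
/-!
With `z = e^{it}`, the entries of `z • rot t` are quadratic polynomials in `z` whose
`z²`-coefficients form the singular matrix `½ [[1, -i], [i, 1]]`. Since `φ_{m,l}` is a form of
degree `m` in the matrix entries, `z^m φ_{m,l}(rot t)` is a polynomial in `z` of degree at most
`2m` whose top coefficient is `φ_{m,l}` of that singular matrix. On a singular matrix every
monomial of `φ_{m,l}` equals `g₀₀^k g₁₁^{m-k}`, and Vandermonde's identity sums the coefficients to
`binom(m,k)`; so the top coefficient is `binom(m,k) / 2^m`, which the normalization of `ψ_{m,l}`
turns into `1`. Dividing by `z^m` gives the expansion in the `e^{ijt}`, `-m ≤ j ≤ m`.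
-/

open Complex

/-- The normalized spherical polynomial `ψ_{m,l} = (2^m / binom(m,k)) φ_{m,l}`. -/
noncomputable def psi (m k : ℕ) (g : Matrix (Fin 2) (Fin 2) ℂ) : ℂ :=
  (2 ^ m / (Nat.choose m k : ℂ)) * phi m k g

/-- `exp(tE)` for `E = [[0,1],[1,0]]`, after the analytic continuation giving the
rotation matrices `[[cos t, sin t],[−sin t, cos t]]`. -/
noncomputable def rot (t : ℝ) : Matrix (Fin 2) (Fin 2) ℂ :=
  !![Complex.cos t, Complex.sin t; -Complex.sin t, Complex.cos t]

open Polynomial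

section SphericalForm

variable {R : Type*} [CommSemiring R]

def sphericalForm (m k : ℕ) (g : Matrix (Fin 2) (Fin 2) R) : R :=
  ∑ i ∈ Finset.range (k + 1),
    (Nat.choose k i : R) * (Nat.choose (m - k) (k - i) : R) *
      g 0 0 ^ i * g 1 0 ^ (k - i) * g 0 1 ^ (k - i) * g 1 1 ^ ((m - k) - (k - i))

theorem phi_eq_sphericalForm (m k : ℕ) (g : Matrix (Fin 2) (Fin 2) ℂ) :
    phi m k g = sphericalForm m k g := rfl

theorem sphericalForm_map {S : Type*} [CommSemiring S] (f : R →+* S) (m k : ℕ)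
    (g : Matrix (Fin 2) (Fin 2) R) : sphericalForm m k (g.map f) = f (sphericalForm m k g) := by
  simp [sphericalForm, map_sum]

theorem sphericalForm_smul (c : R) {m k : ℕ} (hk : k ≤ m) (g : Matrix (Fin 2) (Fin 2) R) :
    sphericalForm m k (c • g) = c ^ m * sphericalForm m k g := by
  rw [sphericalForm, sphericalForm, Finset.mul_sum]
  refine Finset.sum_congr rfl fun i hi => ?_
  by_cases h : k - i ≤ m - k
  · have hm : m = i + (k - i) + (k - i) + (m - k - (k - i)) := by
      simp only [Finset.mem_range] at hi; omega
    simp only [Matrix.smul_apply, smul_eq_mul, mul_pow]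
    rw [hm, pow_add, pow_add, pow_add, ← hm]
    ring
  · simp [Nat.choose_eq_zero_of_lt (not_le.mp h)]

theorem natDegree_mul_pow_le_and_coeff {x p q r s : R[X]} {d : ℕ} (hx : x.natDegree ≤ 0)
    (hp : p.natDegree ≤ d) (hq : q.natDegree ≤ d) (hr : r.natDegree ≤ d)
    (hs : s.natDegree ≤ d) (a b c e : ℕ) :
    (x * p ^ a * q ^ b * r ^ c * s ^ e).natDegree ≤ d * (a + b + c + e) ∧
      (x * p ^ a * q ^ b * r ^ c * s ^ e).coeff (d * (a + b + c + e)) =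
        x.coeff 0 * p.coeff d ^ a * q.coeff d ^ b * r.coeff d ^ c * s.coeff d ^ e := by
  have hd : d * (a + b + c + e) = 0 + a * d + b * d + c * d + e * d := by ring
  have h1 := natDegree_mul_le_of_le hx (natDegree_pow_le_of_le a hp)
  have h2 := natDegree_mul_le_of_le h1 (natDegree_pow_le_of_le b hq)
  have h3 := natDegree_mul_le_of_le h2 (natDegree_pow_le_of_le c hr)
  refine ⟨hd ▸ natDegree_mul_le_of_le h3 (natDegree_pow_le_of_le e hs), ?_⟩
  rw [hd, coeff_mul_add_eq_of_natDegree_le h3 (natDegree_pow_le_of_le e hs),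
    coeff_mul_add_eq_of_natDegree_le h2 (natDegree_pow_le_of_le c hr),
    coeff_mul_add_eq_of_natDegree_le h1 (natDegree_pow_le_of_le b hq),
    coeff_mul_add_eq_of_natDegree_le hx (natDegree_pow_le_of_le a hp),
    coeff_pow_of_natDegree_le hp, coeff_pow_of_natDegree_le hq, coeff_pow_of_natDegree_le hr,
    coeff_pow_of_natDegree_le hs]

theorem natDegree_sphericalForm_le_and_coeff {m k d : ℕ} (hk : k ≤ m)
    {G : Matrix (Fin 2) (Fin 2) R[X]} (hG : ∀ i j, (G i j).natDegree ≤ d) :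
    (sphericalForm m k G).natDegree ≤ d * m ∧
      (sphericalForm m k G).coeff (d * m) = sphericalForm m k (G.map (coeff · d)) := by
  have hterm : ∀ i ∈ Finset.range (k + 1),
      let term := (k.choose i : R[X]) * ((m - k).choose (k - i) : R[X]) * G 0 0 ^ i *
        G 1 0 ^ (k - i) * G 0 1 ^ (k - i) * G 1 1 ^ ((m - k) - (k - i))
      term.natDegree ≤ d * m ∧
        term.coeff (d * m) = (k.choose i : R) * ((m - k).choose (k - i) : R) *
          (G 0 0).coeff d ^ i * (G 1 0).coeff d ^ (k - i) * (G 0 1).coeff d ^ (k - i) *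
            (G 1 1).coeff d ^ ((m - k) - (k - i)) := by
    intro i hi
    by_cases h : k - i ≤ m - k
    · have hm : m = i + (k - i) + (k - i) + ((m - k) - (k - i)) := by
        simp only [Finset.mem_range] at hi; omega
      have hc : ((k.choose i : R[X]) * ((m - k).choose (k - i) : R[X])).natDegree ≤ 0 := by
        rw [← Nat.cast_mul]; exact (natDegree_natCast _).le
      obtain ⟨hdeg, hcoeff⟩ := natDegree_mul_pow_le_and_coeff hc (hG 0 0) (hG 1 0) (hG 0 1)
        (hG 1 1) i (k - i) (k - i) ((m - k) - (k - i))
      rw [← hm] at hdeg hcoeff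
      refine ⟨hdeg, hcoeff.trans ?_⟩
      rw [← Nat.cast_mul, coeff_natCast_ite, if_pos rfl, Nat.cast_mul]
    · simp [Nat.choose_eq_zero_of_lt (not_le.mp h)]
  refine ⟨natDegree_sum_le_of_forall_le _ _ fun i hi => (hterm i hi).1, ?_⟩
  rw [sphericalForm, finsetSum_coeff]
  exact Finset.sum_congr rfl fun i hi => (hterm i hi).2

end SphericalForm

theorem sum_choose_mul_choose_sub {m k : ℕ} (hk : k ≤ m) :
    ∑ i ∈ Finset.range (k + 1), k.choose i * (m - k).choose (k - i) = m.choose k := by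
  conv_rhs => rw [← Nat.add_sub_cancel' hk, Nat.add_choose_eq,
    Finset.Nat.sum_antidiagonal_eq_sum_range_succ_mk]

theorem sphericalForm_of_det_eq_zero {R : Type*} [CommRing R] {m k : ℕ} (hk : k ≤ m)
    {g : Matrix (Fin 2) (Fin 2) R} (hg : g.det = 0) :
    sphericalForm m k g = m.choose k * g 0 0 ^ k * g 1 1 ^ (m - k) := by
  have hbc : g 1 0 * g 0 1 = g 0 0 * g 1 1 := by
    rw [Matrix.det_fin_two] at hg; linear_combination -hg
  have hterm : ∀ i ∈ Finset.range (k + 1),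
      (k.choose i : R) * ((m - k).choose (k - i) : R) * g 0 0 ^ i * g 1 0 ^ (k - i) *
        g 0 1 ^ (k - i) * g 1 1 ^ ((m - k) - (k - i)) =
      (k.choose i * (m - k).choose (k - i) : ℕ) * (g 0 0 ^ k * g 1 1 ^ (m - k)) := by
    intro i hi
    by_cases h : k - i ≤ m - k
    · have hik : i ≤ k := Nat.lt_succ_iff.mp (Finset.mem_range.mp hi)
      calc _ = (k.choose i * (m - k).choose (k - i) : ℕ) *
              (g 0 0 ^ i * (g 1 0 * g 0 1) ^ (k - i) * g 1 1 ^ ((m - k) - (k - i))) := by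
            push_cast; ring
        _ = (k.choose i * (m - k).choose (k - i) : ℕ) *
              (g 0 0 ^ (i + (k - i)) * g 1 1 ^ ((k - i) + ((m - k) - (k - i)))) := by
            rw [hbc, mul_pow, pow_add, pow_add]; ring
        _ = _ := by rw [Nat.add_sub_cancel' hik, Nat.add_sub_cancel' h]
    · simp [Nat.choose_eq_zero_of_lt (not_le.mp h)]
  rw [sphericalForm, Finset.sum_congr rfl hterm, ← Finset.sum_mul, ← Nat.cast_sum,
    sum_choose_mul_choose_sub hk, mul_assoc]

theorem exists_exp_expansion_of_natDegree_le {q : ℂ[X]} {n : ℕ} (hq : q.natDegree ≤ 2 * n) :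
    ∃ c : ℤ → ℂ, ∀ t : ℝ, exp (-(n : ℂ) * t * I) * q.eval (exp (t * I)) =
      q.coeff (2 * n) * exp ((n : ℂ) * t * I) +
        ∑ j ∈ Finset.Ico (-(n : ℤ)) n, c j * exp ((j : ℂ) * t * I) := by
  refine ⟨fun j => q.coeff (j + n).toNat, fun t => ?_⟩
  have hshift : ∀ i : ℕ, exp (-(n : ℂ) * t * I) * exp (t * I) ^ i =
      exp ((((i : ℤ) - n : ℤ) : ℂ) * t * I) := by
    intro i
    rw [← Complex.exp_nat_mul, ← Complex.exp_add]; push_cast; ring_nf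
  rw [eval_eq_sum_range' (Nat.lt_succ_of_le hq), Finset.sum_range_succ, mul_add, add_comm,
    Finset.mul_sum, mul_left_comm, hshift]
  congr 1
  · push_cast; ring_nf
  · refine Finset.sum_nbij' (fun i => (i : ℤ) - n) (fun j => (j + n).toNat) ?_ ?_ ?_ ?_ ?_
    all_goals intro x hx
    · simp only [Finset.mem_range, Finset.mem_Ico] at *; omega
    · simp only [Finset.mem_range, Finset.mem_Ico] at *; omega
    · simp
    · simp only [Finset.mem_Ico] at hx; omega
    · rw [mul_left_comm, hshift]; simp

/-- `e^{it} • rot t` as a polynomial in `z = e^{it}`: `z cos t = (z² + 1) / 2` and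
`z sin t = -i (z² - 1) / 2`. -/
noncomputable def rotPoly : Matrix (Fin 2) (Fin 2) ℂ[X] :=
  !![C (1 / 2) * (X ^ 2 + 1), C (-I / 2) * (X ^ 2 - 1);
    C (I / 2) * (X ^ 2 - 1), C (1 / 2) * (X ^ 2 + 1)]

theorem rotPoly_map_eval (t : ℝ) :
    rotPoly.map (eval (exp (t * I))) = exp (t * I) • rot t := by
  ext i j
  fin_cases i <;> fin_cases j <;>
    simp [rotPoly, rot, Complex.cos, Complex.sin, neg_mul, Complex.exp_neg] <;> field_simp <;> ring

theorem natDegree_rotPoly_le (i j : Fin 2) : (rotPoly i j).natDegree ≤ 2 := by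
  fin_cases i <;> fin_cases j <;> simp [rotPoly] <;> compute_degree

theorem rotPoly_map_coeff_two : rotPoly.map (coeff · 2) = !![1 / 2, -I / 2; I / 2, 1 / 2] := by
  ext i j
  fin_cases i <;> fin_cases j <;> simp [rotPoly, coeff_one]

theorem phi_rot_eq (m k : ℕ) (hk : k ≤ m) (t : ℝ) :
    phi m k (rot t) =
      exp (-(m : ℂ) * t * I) * (sphericalForm m k rotPoly).eval (exp (t * I)) := by
  rw [← coe_evalRingHom, ← sphericalForm_map, coe_evalRingHom, rotPoly_map_eval,
    sphericalForm_smul _ hk, ← mul_assoc, ← Complex.exp_nat_mul, ← Complex.exp_add,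
    phi_eq_sphericalForm, show -(m : ℂ) * t * I + m * (t * I) = 0 by ring, Complex.exp_zero,
    one_mul]

theorem coeff_sphericalForm_rotPoly {m k : ℕ} (hk : k ≤ m) :
    (sphericalForm m k rotPoly).coeff (2 * m) = m.choose k / 2 ^ m := by
  have hdet : (!![1 / 2, -I / 2; I / 2, 1 / 2] : Matrix (Fin 2) (Fin 2) ℂ).det = 0 := by
    rw [Matrix.det_fin_two_of]; linear_combination (1 / 4 : ℂ) * I_sq
  rw [(natDegree_sphericalForm_le_and_coeff hk natDegree_rotPoly_le).2, rotPoly_map_coeff_two,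
    sphericalForm_of_det_eq_zero hk hdet]
  simp only [Matrix.of_apply, Matrix.cons_val', Matrix.cons_val_zero, Matrix.cons_val_one,
    Matrix.cons_val_fin_one]
  rw [mul_assoc, ← pow_add, Nat.add_sub_cancel' hk, one_div_pow, mul_one_div]

theorem psi_leading_term_general (m k : ℕ) (hk : k ≤ m) :
    ∃ c : ℤ → ℂ, ∀ t : ℝ,
      psi m k (rot t) =
        Complex.exp ((m : ℂ) * t * I) +
          ∑ j ∈ Finset.Ico (-(m : ℤ)) (m : ℤ), c j * Complex.exp ((j : ℂ) * t * I) := by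
  have hchoose : (m.choose k : ℂ) ≠ 0 := Nat.cast_ne_zero.mpr (Nat.choose_pos hk).ne'
  obtain ⟨c, hc⟩ := exists_exp_expansion_of_natDegree_le <| (natDegree_C_mul_le _ _).trans
    (natDegree_sphericalForm_le_and_coeff hk natDegree_rotPoly_le).1
  refine ⟨c, fun t => ?_⟩
  rw [psi, phi_rot_eq m k hk, mul_left_comm, ← eval_C_mul, hc t, coeff_C_mul,
    coeff_sphericalForm_rotPoly hk, div_mul_div_cancel₀ hchoose, div_self (by simp), one_mul]

/-- `ψ_{m,l}(exp(tE))` is a trigonometric polynomial in `t` with leading term `e^{imt}`: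
`ψ_{m,l}(exp(tE)) − e^{imt}` is a linear combination of the lower-order exponentials
`e^{ijt}`, `−m ≤ j < m`. -/
theorem psi_leading_term (m k : ℕ) (hk : k ≤ m) (l : ℤ) (hl : l = (m : ℤ) - 2 * k) :
    ∃ c : ℤ → ℂ, ∀ t : ℝ,
      psi m k (rot t) =
        Complex.exp ((m : ℂ) * t * I) +
          ∑ j ∈ Finset.Ico (-(m : ℤ)) (m : ℤ), c j * Complex.exp ((j : ℂ) * t * I) :=
  psi_leading_term_general m k hk
end

section
/- With (e, v₁, w, v₂) a Jordan quadrangle, the elements E_j⁺ = D(v_j, e), E_j⁻ = D(e, v_j), H_j = D(v_j, v_j) − D(e, e) form an sl(2)-triple for each j = 1,2: [H_j, E_j^±] = ±2 E_j^± and [E_j⁺, E_j⁻] = H_j. -/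
/-- A Hermitian Jordan triple system, with the Jordan triple identity (from which the
commutator identity `[D(u,v), D(x,y)] = D(D(u,v)x, y) − D(x, D(v,u)y)` follows). -/
structure JordanTriple (V : Type*) [AddCommGroup V] [Module ℂ V] where
  D : V → V → V →ₗ[ℂ] V
  add_left : ∀ x x' y, D (x + x') y = D x y + D x' y
  smul_left : ∀ (c : ℂ) (x y : V), D (c • x) y = c • D x y
  add_right : ∀ x y y', D x (y + y') = D x y + D x y'
  smul_right : ∀ (c : ℂ) (x y : V), D x (c • y) = (starRingEnd ℂ c) • D x y
  outer_symm : ∀ x y z, D x y z = D z y x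
  jordan : ∀ u v x y z,
    D u v (D x y z) = D (D u v x) y z - D x (D v u y) z + D x y (D u v z)

/-- The commutator identity for a Jordan triple. -/
lemma JordanTriple.comm {V : Type*} [AddCommGroup V] [Module ℂ V] (J : JordanTriple V)
    (u v x y : V) :
    (J.D u v).comp (J.D x y) - (J.D x y).comp (J.D u v)
      = J.D (J.D u v x) y - J.D x (J.D v u y) := by
  ext z
  have := J.jordan u v x y z
  simp only [LinearMap.sub_apply, LinearMap.comp_apply, this]
  abel

/-- sl(2)-triple from a pair of tripotents in each other's Peirce 1-space. -/
lemma JordanTriple.sl2_aux {V : Type*} [AddCommGroup V] [Module ℂ V] (J : JordanTriple V)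
    (e v : V) (he : J.D e e e = (2 : ℂ) • e) (hv : J.D v v v = (2 : ℂ) • v)
    (h1 : J.D e e v = v) (h2 : J.D v v e = e) :
    ((J.D v v - J.D e e).comp (J.D v e) - (J.D v e).comp (J.D v v - J.D e e) =
        (2 : ℂ) • J.D v e) ∧
    ((J.D v v - J.D e e).comp (J.D e v) - (J.D e v).comp (J.D v v - J.D e e) =
        (-2 : ℂ) • J.D e v) ∧
    ((J.D v e).comp (J.D e v) - (J.D e v).comp (J.D v e) = J.D v v - J.D e e) := by
  have star2 : (starRingEnd ℂ) (2 : ℂ) = 2 := map_ofNat _ 2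
  refine ⟨?_, ?_, ?_⟩
  · have c1 := J.comm v v v e
    rw [hv, h2, J.smul_left] at c1
    have c2 := J.comm e e v e
    rw [h1, he, J.smul_right, star2] at c2
    have expand : (J.D v v - J.D e e).comp (J.D v e) - (J.D v e).comp (J.D v v - J.D e e)
        = ((J.D v v).comp (J.D v e) - (J.D v e).comp (J.D v v))
          - ((J.D e e).comp (J.D v e) - (J.D v e).comp (J.D e e)) := by
      simp only [LinearMap.sub_comp, LinearMap.comp_sub]; abel
    rw [expand, c1, c2]; module
  · have c1 := J.comm v v e v
    rw [hv, h2, J.smul_right, star2] at c1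
    have c2 := J.comm e e e v
    rw [h1, he, J.smul_left] at c2
    have expand : (J.D v v - J.D e e).comp (J.D e v) - (J.D e v).comp (J.D v v - J.D e e)
        = ((J.D v v).comp (J.D e v) - (J.D e v).comp (J.D v v))
          - ((J.D e e).comp (J.D e v) - (J.D e v).comp (J.D e e)) := by
      simp only [LinearMap.sub_comp, LinearMap.comp_sub]; abel
    rw [expand, c1, c2]; module
  · have c1 := J.comm v e e v
    have hve : J.D v e e = v := by rw [J.outer_symm, h1]
    have hev : J.D e v v = e := by rw [J.outer_symm, h2]
    rw [hve, hev] at c1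
    exact c1

/-- With `(e, v₁, w, v₂)` a Jordan quadrangle of minimal tripotents, the elements
`E_j⁺ = D(v_j, e)`, `E_j⁻ = D(e, v_j)`, `H_j = D(v_j, v_j) − D(e, e)` form an
sl(2)-triple for each `j = 1, 2`:
`[H_j, E_j^±] = ±2E_j^±` and `[E_j⁺, E_j⁻] = H_j`. -/
theorem quadrangle_sl2_triple {V : Type*} [AddCommGroup V] [Module ℂ V]
    (J : JordanTriple V) (e v₁ w v₂ : V)
    -- each of the four elements is a (minimal) tripotent
    (htri : ∀ u ∈ ({e, v₁, w, v₂} : Set V), J.D u u u = (2 : ℂ) • u)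
    (hmin : ∀ u ∈ ({e, v₁, w, v₂} : Set V), ∀ x : V,
      J.D u u x = (2 : ℂ) • x → ∃ c : ℂ, x = c • u)
    -- consecutive elements lie in each other's Peirce 1-space
    (hP1a : J.D e e v₁ = v₁) (hP1b : J.D v₁ v₁ e = e)
    (hP1c : J.D v₁ v₁ w = w) (hP1d : J.D w w v₁ = v₁)
    (hP1e : J.D w w v₂ = v₂) (hP1f : J.D v₂ v₂ w = w)
    (hP1g : J.D v₂ v₂ e = e) (hP1h : J.D e e v₂ = v₂)
    -- opposite elements are orthogonal tripotents
    (horth1 : J.D e w = 0) (horth2 : J.D w e = 0)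
    (horth3 : J.D v₁ v₂ = 0) (horth4 : J.D v₂ v₁ = 0)
    -- the quadrangle relations D(u_i, u_{i+1})u_{i+2} = u_{i+3}
    (hq1 : J.D e v₁ w = v₂) (hq2 : J.D v₁ w v₂ = e)
    (hq3 : J.D w v₂ e = v₁) (hq4 : J.D v₂ e v₁ = w) :
    ((J.D v₁ v₁ - J.D e e).comp (J.D v₁ e) - (J.D v₁ e).comp (J.D v₁ v₁ - J.D e e) =
        (2 : ℂ) • J.D v₁ e) ∧
    ((J.D v₁ v₁ - J.D e e).comp (J.D e v₁) - (J.D e v₁).comp (J.D v₁ v₁ - J.D e e) =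
        (-2 : ℂ) • J.D e v₁) ∧
    ((J.D v₁ e).comp (J.D e v₁) - (J.D e v₁).comp (J.D v₁ e) =
        J.D v₁ v₁ - J.D e e) ∧
    ((J.D v₂ v₂ - J.D e e).comp (J.D v₂ e) - (J.D v₂ e).comp (J.D v₂ v₂ - J.D e e) =
        (2 : ℂ) • J.D v₂ e) ∧
    ((J.D v₂ v₂ - J.D e e).comp (J.D e v₂) - (J.D e v₂).comp (J.D v₂ v₂ - J.D e e) =
        (-2 : ℂ) • J.D e v₂) ∧
    ((J.D v₂ e).comp (J.D e v₂) - (J.D e v₂).comp (J.D v₂ e) =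
        J.D v₂ v₂ - J.D e e) := by
  have he : J.D e e e = (2 : ℂ) • e := htri e (by simp)
  have hv1 : J.D v₁ v₁ v₁ = (2 : ℂ) • v₁ := htri v₁ (by simp)
  have hv2 : J.D v₂ v₂ v₂ = (2 : ℂ) • v₂ := htri v₂ (by simp)
  obtain ⟨a1, a2, a3⟩ := J.sl2_aux e v₁ he hv1 hP1a hP1b
  obtain ⟨b1, b2, b3⟩ := J.sl2_aux e v₂ he hv2 hP1h hP1g
  exact ⟨a1, a2, a3, b1, b2, b3⟩
end

section
/- Let D = G/K be a Hermitian symmetric space with dimension d, genus p, and let the variety of minimal rational tangents K/L₀ (for types II, IV, V, VI, rank ≥ 2) have dimension d₁ and genus p₁. Then p/d + d₁/p₁ = 2. Explicitly, for type IV_n (n > 4): d = n, p = n, d₁ = n−2, p₁ = n−2; for type II_{2r}: d = r(2r−1), p = 2(2r−1), d₁ = 2(2r−2), p₁ = 2r; for type V: d = 16, p = 12, d₁ = 10, p₁ = 8; for type VI: d = 27, p = 18, d₁ = 16, p₁ = 12. -/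
/-- Dimension of an irreducible bounded symmetric domain of rank `r` with
characteristics `(a, b)`: `d = r + (a/2)r(r−1) + rb`. -/
noncomputable def Jdim (r a b : ℚ) : ℚ := r + a * r * (r - 1) / 2 + r * b

/-- Genus: `p = 2 + a(r−1) + b`. -/
noncomputable def Jgenus (r a b : ℚ) : ℚ := 2 + a * (r - 1) + b

/-- Duality `p/d + d₁/p₁ = 2` between a Hermitian symmetric space `D = G/K` (dimension
`d`, genus `p`) and its variety of minimal rational tangents `K/L₀` (dimension `d₁`,
genus `p₁`), for types II, IV, V, VI of rank ≥ 2, with the explicit values: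
IV_n (n > 4): d = n, p = n, d₁ = n−2, p₁ = n−2 (domain char (n−2,0), VMRT char (n−4,0));
II_{2r}: d = r(2r−1), p = 2(2r−1), d₁ = 2(2r−2), p₁ = 2r (char (4,0), VMRT (2,2r−4));
V: d = 16, p = 12, d₁ = 10, p₁ = 8 (char (6,4), VMRT (4,2));
VI: d = 27, p = 18, d₁ = 16, p₁ = 12 (char (8,0), VMRT (6,4)). -/
theorem vmrt_duality :
    (∀ n : ℕ, 4 < n →
      Jdim 2 ((n : ℚ) - 2) 0 = (n : ℚ) ∧ Jgenus 2 ((n : ℚ) - 2) 0 = (n : ℚ) ∧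
      Jdim 2 ((n : ℚ) - 4) 0 = (n : ℚ) - 2 ∧ Jgenus 2 ((n : ℚ) - 4) 0 = (n : ℚ) - 2 ∧
      Jgenus 2 ((n : ℚ) - 2) 0 / Jdim 2 ((n : ℚ) - 2) 0 +
        Jdim 2 ((n : ℚ) - 4) 0 / Jgenus 2 ((n : ℚ) - 4) 0 = 2) ∧
    (∀ r : ℕ, 2 ≤ r →
      Jdim (r : ℚ) 4 0 = (r : ℚ) * (2 * (r : ℚ) - 1) ∧
      Jgenus (r : ℚ) 4 0 = 2 * (2 * (r : ℚ) - 1) ∧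
      Jdim 2 2 (2 * (r : ℚ) - 4) = 2 * (2 * (r : ℚ) - 2) ∧
      Jgenus 2 2 (2 * (r : ℚ) - 4) = 2 * (r : ℚ) ∧
      Jgenus (r : ℚ) 4 0 / Jdim (r : ℚ) 4 0 +
        Jdim 2 2 (2 * (r : ℚ) - 4) / Jgenus 2 2 (2 * (r : ℚ) - 4) = 2) ∧
    (Jdim 2 6 4 = 16 ∧ Jgenus 2 6 4 = 12 ∧ Jdim 2 4 2 = 10 ∧ Jgenus 2 4 2 = 8 ∧
      Jgenus 2 6 4 / Jdim 2 6 4 + Jdim 2 4 2 / Jgenus 2 4 2 = 2) ∧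
    (Jdim 3 8 0 = 27 ∧ Jgenus 3 8 0 = 18 ∧ Jdim 2 6 4 = 16 ∧ Jgenus 2 6 4 = 12 ∧
      Jgenus 3 8 0 / Jdim 3 8 0 + Jdim 2 6 4 / Jgenus 2 6 4 = 2) := by
  refine ⟨?_, ?_, ?_, ?_⟩
  · intro n hn
    have h : (4 : ℚ) < (n : ℚ) := by exact_mod_cast hn
    have hd : (n : ℚ) ≠ 0 := by linarith
    have hp : (n : ℚ) - 2 ≠ 0 := by intro h'; linarith
    have e1 : Jdim 2 ((n : ℚ) - 2) 0 = (n : ℚ) := by simp [Jdim]; ring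
    have e2 : Jgenus 2 ((n : ℚ) - 2) 0 = (n : ℚ) := by simp [Jgenus]; ring
    have e3 : Jdim 2 ((n : ℚ) - 4) 0 = (n : ℚ) - 2 := by simp [Jdim]; ring
    have e4 : Jgenus 2 ((n : ℚ) - 4) 0 = (n : ℚ) - 2 := by simp [Jgenus]; ring
    refine ⟨e1, e2, e3, e4, ?_⟩
    rw [e1, e2, e3, e4, div_self hd, div_self hp]
    norm_num
  · intro r hr
    have h : (2 : ℚ) ≤ (r : ℚ) := by exact_mod_cast hr
    have hr0 : (r : ℚ) ≠ 0 := by linarith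
    have hr1 : 2 * (r : ℚ) - 1 ≠ 0 := by intro h'; linarith
    have e1 : Jdim (r : ℚ) 4 0 = (r : ℚ) * (2 * (r : ℚ) - 1) := by simp [Jdim]; ring
    have e2 : Jgenus (r : ℚ) 4 0 = 2 * (2 * (r : ℚ) - 1) := by simp [Jgenus]; ring
    have e3 : Jdim 2 2 (2 * (r : ℚ) - 4) = 2 * (2 * (r : ℚ) - 2) := by simp [Jdim]; ring
    have e4 : Jgenus 2 2 (2 * (r : ℚ) - 4) = 2 * (r : ℚ) := by simp [Jgenus]; ring
    refine ⟨e1, e2, e3, e4, ?_⟩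
    rw [e1, e2, e3, e4]
    field_simp
    ring
  · refine ⟨by norm_num [Jdim], by norm_num [Jgenus], by norm_num [Jdim],
      by norm_num [Jgenus], by norm_num [Jdim, Jgenus]⟩
  · refine ⟨by norm_num [Jdim], by norm_num [Jgenus], by norm_num [Jdim],
      by norm_num [Jgenus], by norm_num [Jdim, Jgenus]⟩
end
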